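/- Let machine k have pairwise disjoint, ordered unavailability intervals [u̲_1, ū_1], …, [u̲_q, ū_q] with u̲_ℓ < ū_ℓ < u̲_{ℓ+1}. For an operation with start s and completion c on machine k, suppose binary indicators v_ℓ, w_ℓ satisfy v_ℓ = 1 ⟺ ū_ℓ ≤ s and w_ℓ = 1 ⟺ ū_ℓ < c, and suppose s ≤ c with neither s nor c inside any unavailability interval and s < u̲_ℓ for every ℓ with s < ū_ℓ. Then Σ_ℓ (w_ℓ − v_ℓ)(ū_ℓ − u̲_ℓ) equals the total length of the unavailability intervals contained in [s, c]. -/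

import Mathlib

/-- For ordered pairwise disjoint unavailability intervals `[u̲_ℓ, ū_ℓ]` of a machine and
indicators `v_ℓ = 1 ⟺ ū_ℓ ≤ s`, `w_ℓ = 1 ⟺ ū_ℓ < c`, with `s ≤ c`, neither `s` nor `c`
inside any interval, and `s < u̲_ℓ` whenever `s < ū_ℓ`, the quantity
`∑_ℓ (w_ℓ − v_ℓ)(ū_ℓ − u̲_ℓ)` equals the total length of the unavailability intervals
contained in `[s, c]`. -/
theorem unavailability_sum_formula
    (q : ℕ) (ulow uhigh : Fin q → ℤ)
    (hlt : ∀ ℓ : Fin q, ulow ℓ < uhigh ℓ)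
    (hord : ∀ ℓ : Fin q, ∀ h : ℓ.val + 1 < q, uhigh ℓ < ulow ⟨ℓ.val + 1, h⟩)
    (s c : ℤ) (hsc : s ≤ c)
    (v w : Fin q → ℤ)
    (hv : ∀ ℓ : Fin q, v ℓ = if uhigh ℓ ≤ s then 1 else 0)
    (hw : ∀ ℓ : Fin q, w ℓ = if uhigh ℓ < c then 1 else 0)
    (hsin : ∀ ℓ : Fin q, ¬ (ulow ℓ ≤ s ∧ s < uhigh ℓ))
    (hcin : ∀ ℓ : Fin q, ¬ (ulow ℓ < c ∧ c ≤ uhigh ℓ))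
    (hsleft : ∀ ℓ : Fin q, s < uhigh ℓ → s < ulow ℓ) :
    (∑ ℓ : Fin q, (w ℓ - v ℓ) * (uhigh ℓ - ulow ℓ))
      = ∑ ℓ ∈ Finset.univ.filter (fun ℓ : Fin q => s ≤ ulow ℓ ∧ uhigh ℓ ≤ c),
          (uhigh ℓ - ulow ℓ) := by
  rw [Finset.sum_filter]
  apply Finset.sum_congr rfl
  intro ℓ _
  have h1 := hlt ℓ
  have h2 := hsin ℓ
  have h3 := hcin ℓ
  have h4 := hsleft ℓ
  rw [hv, hw]
  split_ifs with hB hA hC hC hA hC hC <;> first | omega | (ring_nf; omega)
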